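/- For every S ∈ {1/2, 1, 3/2, …} there exist rational numbers a_0, a_1, …, a_{2S} such that the swap operator P on ℂ^θ ⊗ ℂ^θ (θ = 2S+1) satisfies P = ∑_{k=0}^{2S} a_k · (S_x·S_y)^k, where S_x·S_y = ∑_{j=1}^{3} Sʲ ⊗ Sʲ. -/

import Mathlib

open scoped Kronecker

/-- The spin quantum number `S = (θ−1)/2`. -/
noncomputable def spinS (θ : ℕ) : ℝ := ((θ : ℝ) - 1) / 2

/-- The magnetic quantum number `m` attached to the `i`-th basis vector:
`m = i − S ∈ {−S, −S+1, …, S}`. -/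
noncomputable def mval (θ : ℕ) (i : Fin θ) : ℝ := (i : ℝ) - spinS θ

/-- The spin matrix `S³` (diagonal with entries `m`). -/
noncomputable def spin3 (θ : ℕ) : Matrix (Fin θ) (Fin θ) ℂ :=
  Matrix.diagonal fun i => ((mval θ i : ℝ) : ℂ)

/-- The raising operator `S⁺`, with entries `S⁺_{m+1,m} = √(S(S+1) − m(m+1))`. -/
noncomputable def spinPlus (θ : ℕ) : Matrix (Fin θ) (Fin θ) ℂ :=
  Matrix.of fun i j =>
    if (i : ℕ) = (j : ℕ) + 1 then
      ((Real.sqrt (spinS θ * (spinS θ + 1) - mval θ j * (mval θ j + 1)) : ℝ) : ℂ)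
    else 0

/-- The lowering operator `S⁻`, the transpose of `S⁺`. -/
noncomputable def spinMinus (θ : ℕ) : Matrix (Fin θ) (Fin θ) ℂ :=
  (spinPlus θ).transpose

/-- The spin matrix `S¹ = (S⁺ + S⁻)/2`. -/
noncomputable def spin1 (θ : ℕ) : Matrix (Fin θ) (Fin θ) ℂ :=
  (1 / 2 : ℂ) • (spinPlus θ + spinMinus θ)

/-- The spin matrix `S² = (S⁺ − S⁻)/(2i)`. -/
noncomputable def spin2 (θ : ℕ) : Matrix (Fin θ) (Fin θ) ℂ :=
  (1 / (2 * Complex.I) : ℂ) • (spinPlus θ - spinMinus θ)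

/-- The Heisenberg interaction `S_x·S_y = ∑_{j=1}^3 Sʲ ⊗ Sʲ` on `ℂ^θ ⊗ ℂ^θ`. -/
noncomputable def heisenberg (θ : ℕ) : Matrix (Fin θ × Fin θ) (Fin θ × Fin θ) ℂ :=
  spin1 θ ⊗ₖ spin1 θ + spin2 θ ⊗ₖ spin2 θ + spin3 θ ⊗ₖ spin3 θ

/-- The swap operator `P`, determined by `P(u ⊗ v) = v ⊗ u`. -/
def swapOp (θ : ℕ) : Matrix (Fin θ × Fin θ) (Fin θ × Fin θ) ℂ :=
  Matrix.of fun p q => if p.1 = q.2 ∧ p.2 = q.1 then 1 else 0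

/-!
The total spin `S_x + S_y` (the `sl₂`-triple `A ↦ A ⊗ 1 + 1 ⊗ A` applied to `S³, S⁺, S⁻`) splits
`ℂ^θ ⊗ ℂ^θ` into blocks of spin `j = 0, …, θ - 1`, each spanned by the vectors `F^k v_j`
(`k ≤ 2j`) obtained by applying the total lowering operator `F` to an explicit highest weight
vector `v_j`. Up to an additive constant, `S_x·S_y` is half the Casimir of the total spin, so it
commutes with `F` and acts on the spin-`j` block by `λ_j = j(j+1)/2 - S(S+1)`; the swap also
commutes with `F` and acts on `v_j`, hence on the whole block, by `(-1)^(j + 2S)`. These `θ²`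
vectors form a basis and the `λ_j` are distinct, so the swap is `p(S_x·S_y)` for the Lagrange
polynomial `p` with `p(λ_j) = (-1)^(j + 2S)`.
-/

attribute [local instance 100] LieRing.ofAssociativeRing

lemma IsSl2Triple.map {R L L' : Type*} [CommRing R] [LieRing L] [LieAlgebra R L] [LieRing L']
    [LieAlgebra R L'] {h e f : L} (t : IsSl2Triple h e f) (φ : L →ₗ⁅R⁆ L')
    (hφ : Function.Injective φ) : IsSl2Triple (φ h) (φ e) (φ f) where
  h_ne_zero := (map_ne_zero_iff φ hφ).mpr t.h_ne_zero
  lie_e_f := by rw [← LieHom.map_lie, t.lie_e_f]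
  lie_h_e_nsmul := by rw [← LieHom.map_lie, t.lie_h_e_nsmul, map_nsmul]
  lie_h_f_nsmul := by rw [← LieHom.map_lie, t.lie_h_f_nsmul, map_neg, map_nsmul]

lemma commute_casimir {A : Type*} [Ring A] {h e f : A} (hef : ⁅e, f⁆ = h)
    (hhf : ⁅h, f⁆ = -(2 • f)) : Commute (4 • (f * e) + h * h + 2 • h) f := by
  have hef' : e * f = f * e + h := by rw [← hef, Ring.lie_def]; abel
  have hhf' : h * f = f * h - 2 • f := by rw [sub_eq_add_neg, ← hhf, Ring.lie_def]; abel
  calc (4 • (f * e) + h * h + 2 • h) * f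
      = 4 • (f * (e * f)) + h * (h * f) + 2 • (h * f) := by noncomm_ring
    _ = 4 • (f * (f * e + h)) + h * (f * h - 2 • f) + 2 • (f * h - 2 • f) := by rw [hef', hhf']
    _ = 4 • (f * f * e) + 6 • (f * h) + (h * f) * h - 2 • (h * f) - 4 • f := by noncomm_ring
    _ = f * (4 • (f * e) + h * h + 2 • h) := by rw [hhf']; noncomm_ring

lemma Polynomial.exists_natDegree_lt_eval_eq {F : Type*} [Field F] {n : ℕ} (hn : 0 < n)
    {x : Fin n → F} (hx : Function.Injective x) (y : Fin n → F) :
    ∃ q : Polynomial F, q.natDegree < n ∧ ∀ i, q.eval (x i) = y i := by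
  refine ⟨Lagrange.interpolate Finset.univ x y, ?_, fun i =>
    Lagrange.eval_interpolate_at_node y hx.injOn (Finset.mem_univ i)⟩
  rcases eq_or_ne (Lagrange.interpolate Finset.univ x y) 0 with h | h
  · rw [h, natDegree_zero]
    exact hn
  · rw [natDegree_lt_iff_degree_lt h]
    simpa using Lagrange.degree_interpolate_lt (s := Finset.univ) y hx.injOn

lemma Finset.sum_range_two_mul_add_one (n : ℕ) : ∑ i ∈ Finset.range n, (2 * i + 1) = n * n := by
  induction n with
  | zero => rfl
  | succ n ih =>
    rw [Finset.sum_range_succ, ih]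
    ring

namespace Matrix

lemma sub_kronecker {l m n p α : Type*} [Ring α] (A B : Matrix l m α) (C : Matrix n p α) :
    (A - B) ⊗ₖ C = A ⊗ₖ C - B ⊗ₖ C := by
  ext
  simp [sub_mul]

lemma kronecker_sub {l m n p α : Type*} [Ring α] (A : Matrix l m α) (B C : Matrix n p α) :
    A ⊗ₖ (B - C) = A ⊗ₖ B - A ⊗ₖ C := by
  ext
  simp [mul_sub]

variable {n R : Type*} [Fintype n] [DecidableEq n] [CommRing R]

def kroneckerSum : Matrix n n R →ₗ⁅R⁆ Matrix (n × n) (n × n) R where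
  toFun A := A ⊗ₖ 1 + 1 ⊗ₖ A
  map_add' A B := by
    rw [add_kronecker, kronecker_add]
    abel
  map_smul' c A := by
    rw [smul_kronecker, kronecker_smul, smul_add, RingHom.id_apply]
  map_lie' {A B} := by
    simp only [Ring.lie_def, add_mul, mul_add, ← mul_kronecker_mul, mul_one, one_mul,
      sub_kronecker, kronecker_sub]
    abel

lemma kroneckerSum_apply (A : Matrix n n R) : kroneckerSum A = A ⊗ₖ 1 + 1 ⊗ₖ A := rfl

lemma kroneckerSum_injective [IsAddTorsionFree R] :
    Function.Injective (kroneckerSum : Matrix n n R → Matrix (n × n) (n × n) R) := by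
  rw [injective_iff_map_eq_zero]
  intro A hA
  ext a c
  have h := congrFun (congrFun hA (a, a)) (c, a)
  rcases eq_or_ne a c with rfl | hac
  · simp only [kroneckerSum_apply, add_apply, kroneckerMap_apply, one_apply_eq, mul_one,
      one_mul, zero_apply, ← two_nsmul, two_nsmul_eq_zero] at h
    simpa using h
  · simpa [kroneckerSum_apply, hac] using h

lemma kroneckerSum_mul_kroneckerSum (A B : Matrix n n R) :
    kroneckerSum A * kroneckerSum B = (A * B) ⊗ₖ 1 + A ⊗ₖ B + B ⊗ₖ A + 1 ⊗ₖ (A * B) := by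
  simp only [kroneckerSum_apply, add_mul, mul_add, ← mul_kronecker_mul, mul_one, one_mul]
  abel

lemma kroneckerSum_mulVec_apply (A : Matrix n n R) (v : n × n → R) (a b : n) :
    (kroneckerSum A *ᵥ v) (a, b) = (A *ᵥ fun c => v (c, b)) a + (A *ᵥ fun d => v (a, d)) b := by
  rw [kroneckerSum_apply, add_mulVec, Pi.add_apply]
  congr 1 <;> simp [mulVec, dotProduct, Fintype.sum_prod_type, one_apply]

lemma toLin'_pow_apply (M : Matrix n n R) (k : ℕ) (v : n → R) :
    (toLin' M ^ k) v = M ^ k *ᵥ v := by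
  rw [← Matrix.toLinAlgEquiv'_apply, map_pow]
  rfl

lemma aeval_mulVec_eq_eval_smul {M : Matrix n n R} {μ : R} {v : n → R} (h : M *ᵥ v = μ • v)
    (p : Polynomial R) : Polynomial.aeval M p *ᵥ v = p.eval μ • v := by
  rcases eq_or_ne v 0 with rfl | hv
  · simp
  rw [← Matrix.toLinAlgEquiv'_apply, ← Polynomial.aeval_algHom_apply]
  exact Module.End.aeval_apply_of_hasEigenvector
    ⟨Module.End.mem_eigenspace_iff.mpr (by rwa [Matrix.toLinAlgEquiv'_apply]), hv⟩

end Matrix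

namespace SpinSwap

open Matrix

variable {θ : ℕ}

/-- The entry `S⁺_{j+1,j}`, with the basis indexed by `j = m + S ∈ {0, …, θ - 1}`. -/
noncomputable def raisingCoeff (θ j : ℕ) : ℂ := (√(((j : ℝ) + 1) * ((θ : ℝ) - 1 - j)) : ℝ)

lemma raisingCoeff_mul_self {j : ℕ} (hj : j < θ) :
    raisingCoeff θ j * raisingCoeff θ j = ((j : ℂ) + 1) * ((θ : ℂ) - 1 - j) := by
  have hj' : (j : ℝ) + 1 ≤ θ := by exact_mod_cast hj
  rw [raisingCoeff, ← Complex.ofReal_mul, Real.mul_self_sqrt (by nlinarith)]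
  push_cast
  ring

lemma raisingCoeff_ne_zero {j : ℕ} (hj : j + 1 < θ) : raisingCoeff θ j ≠ 0 := by
  have hj' : (j : ℝ) + 1 < θ := by exact_mod_cast hj
  rw [raisingCoeff, Complex.ofReal_ne_zero, Real.sqrt_ne_zero']
  nlinarith

lemma spinPlus_apply (i j : Fin θ) :
    spinPlus θ i j = if (i : ℕ) = j + 1 then raisingCoeff θ j else 0 := by
  have h : spinS θ * (spinS θ + 1) - mval θ j * (mval θ j + 1)
      = ((j : ℝ) + 1) * ((θ : ℝ) - 1 - j) := by
    simp only [spinS, mval]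
    ring
  simp only [spinPlus, of_apply, h, raisingCoeff]

lemma spinPlus_mulVec_apply (v : Fin θ → ℂ) (a : Fin θ) :
    (spinPlus θ *ᵥ v) a =
      if h : 0 < (a : ℕ) then raisingCoeff θ (a - 1) * v ⟨a - 1, by omega⟩ else 0 := by
  obtain ⟨_ | a, ha⟩ := a
  · simp [mulVec, dotProduct, spinPlus_apply]
  · have hc : ∀ c : Fin θ, a = (c : ℕ) ↔ ⟨a, by omega⟩ = c := by simp [Fin.ext_iff]
    simp [mulVec, dotProduct, spinPlus_apply, hc]

lemma spinMinus_mulVec_apply (v : Fin θ → ℂ) (b : Fin θ) :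
    (spinMinus θ *ᵥ v) b =
      if h : (b : ℕ) + 1 < θ then raisingCoeff θ b * v ⟨b + 1, h⟩ else 0 := by
  by_cases h : (b : ℕ) + 1 < θ
  · have hc : ∀ c : Fin θ, (c : ℕ) = b + 1 ↔ c = ⟨b + 1, h⟩ := by simp [Fin.ext_iff]
    simp [mulVec, dotProduct, spinMinus, spinPlus_apply, hc, h]
  · have hc : ∀ c : Fin θ, (c : ℕ) ≠ b + 1 := fun c => by omega
    simp [mulVec, dotProduct, spinMinus, spinPlus_apply, hc, h]

lemma spinMinus_mul_spinPlus :
    spinMinus θ * spinPlus θ =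
      diagonal fun a : Fin θ => (((a : ℕ) : ℂ) + 1) * ((θ : ℂ) - 1 - (a : ℕ)) := by
  ext a b
  change (spinMinus θ *ᵥ fun c => spinPlus θ c b) a = _
  simp only [spinMinus_mulVec_apply, diagonal_apply, spinPlus_apply, add_left_inj, Fin.val_inj]
  rcases eq_or_ne a b with rfl | hab
  · rw [if_pos rfl, if_pos rfl]
    split_ifs with h
    · exact raisingCoeff_mul_self (by omega)
    · have ha : ((a : ℕ) : ℂ) = θ - 1 := by
        rw [show (a : ℕ) = θ - 1 by omega, Nat.cast_sub (by omega), Nat.cast_one]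
      rw [ha]
      ring
  · simp [hab]

lemma spinPlus_mul_spinMinus :
    spinPlus θ * spinMinus θ = diagonal fun a : Fin θ => ((a : ℕ) : ℂ) * ((θ : ℂ) - (a : ℕ)) := by
  ext a b
  change (spinPlus θ *ᵥ fun c => spinMinus θ c b) a = _
  simp only [spinPlus_mulVec_apply, diagonal_apply, spinMinus, transpose_apply, spinPlus_apply]
  rcases eq_or_ne a b with rfl | hab
  · rw [if_pos rfl]
    split_ifs with h h'
    · rw [raisingCoeff_mul_self (by omega), Nat.cast_sub h]
      ring
    · omega
    · simp [show (a : ℕ) = 0 by omega]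
  · rw [if_neg hab]
    split_ifs with h h'
    · exact absurd (Fin.ext (by omega)) hab
    all_goals simp

lemma lie_spinPlus_spinMinus : ⁅spinPlus θ, spinMinus θ⁆ = 2 • spin3 θ := by
  rw [Ring.lie_def, spinPlus_mul_spinMinus, spinMinus_mul_spinPlus, spin3, diagonal_sub,
    ← diagonal_smul]
  congr 1
  ext a
  simp only [Pi.smul_apply, mval, spinS]
  push_cast
  ring

lemma lie_spin3_spinPlus : ⁅spin3 θ, spinPlus θ⁆ = spinPlus θ := by
  ext a b
  simp only [Ring.lie_def, spin3, Matrix.sub_apply, diagonal_mul, mul_diagonal, spinPlus_apply,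
    mval]
  split_ifs with h
  · rw [h]
    push_cast
    ring
  · simp

lemma lie_spin3_spinMinus : ⁅spin3 θ, spinMinus θ⁆ = -spinMinus θ := by
  have h := congrArg transpose (lie_spin3_spinPlus (θ := θ))
  rw [Ring.lie_def, transpose_sub, transpose_mul, transpose_mul, spin3, diagonal_transpose,
    ← spin3, ← spinMinus, ← neg_sub] at h
  exact neg_eq_iff_eq_neg.mp h

lemma spinMinus_mul_spinPlus_add_spin3 :
    spinMinus θ * spinPlus θ + spin3 θ * spin3 θ + spin3 θ = (((θ : ℂ) ^ 2 - 1) / 4) • 1 := by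
  rw [spinMinus_mul_spinPlus, spin3, diagonal_mul_diagonal, diagonal_add, diagonal_add,
    ← diagonal_one, ← diagonal_smul]
  congr 1
  ext a
  simp only [Pi.smul_apply, mval, spinS, smul_eq_mul]
  push_cast
  ring

lemma spin3_ne_zero (hθ : 2 ≤ θ) : spin3 θ ≠ 0 := by
  intro h
  have h0 := congrFun (congrFun h ⟨0, by omega⟩) ⟨0, by omega⟩
  have hθ' : (θ : ℝ) ≠ 1 := by exact_mod_cast (show θ ≠ 1 by omega)
  simp only [spin3, diagonal_apply_eq, mval, spinS, Matrix.zero_apply, Complex.ofReal_eq_zero,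
    Nat.cast_zero] at h0
  apply hθ'
  linarith

lemma isSl2Triple_spin (hθ : 2 ≤ θ) : IsSl2Triple (2 • spin3 θ) (spinPlus θ) (spinMinus θ) where
  h_ne_zero := by
    rw [← Nat.cast_smul_eq_nsmul ℂ]
    exact smul_ne_zero two_ne_zero (spin3_ne_zero hθ)
  lie_e_f := lie_spinPlus_spinMinus
  lie_h_e_nsmul := by rw [nsmul_lie, lie_spin3_spinPlus]
  lie_h_f_nsmul := by rw [nsmul_lie, lie_spin3_spinMinus, smul_neg]

lemma isSl2Triple_totalSpin (hθ : 2 ≤ θ) :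
    IsSl2Triple (toLin' (kroneckerSum (2 • spin3 θ))) (toLin' (kroneckerSum (spinPlus θ)))
      (toLin' (kroneckerSum (spinMinus θ))) :=
  ((isSl2Triple_spin hθ).map kroneckerSum kroneckerSum_injective).map
    (Matrix.toLinAlgEquiv' : Matrix (Fin θ × Fin θ) (Fin θ × Fin θ) ℂ ≃ₐ[ℂ] _).toLieEquiv.toLieHom
    (LieEquiv.injective _)

lemma heisenberg_eq :
    heisenberg θ = (1 / 2 : ℂ) • (spinPlus θ ⊗ₖ spinMinus θ + spinMinus θ ⊗ₖ spinPlus θ)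
      + spin3 θ ⊗ₖ spin3 θ := by
  ext p q
  simp only [heisenberg, spin1, spin2, Matrix.add_apply, Matrix.smul_apply, kroneckerMap_apply,
    Matrix.sub_apply, smul_eq_mul]
  field_simp
  ring_nf
  rw [Complex.I_sq]
  ring

lemma casimir_kroneckerSum :
    4 • (kroneckerSum (spinMinus θ) * kroneckerSum (spinPlus θ))
      + kroneckerSum (2 • spin3 θ) * kroneckerSum (2 • spin3 θ) + 2 • kroneckerSum (2 • spin3 θ)
      = (8 : ℂ) • heisenberg θ + (2 * ((θ : ℂ) ^ 2 - 1)) • 1 := by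
  have hC : spinMinus θ * spinPlus θ
      = (((θ : ℂ) ^ 2 - 1) / 4) • 1 - spin3 θ * spin3 θ - spin3 θ := by
    rw [← spinMinus_mul_spinPlus_add_spin3]; abel
  rw [map_nsmul, smul_mul_smul_comm, kroneckerSum_mul_kroneckerSum, kroneckerSum_mul_kroneckerSum,
    kroneckerSum_apply, hC, heisenberg_eq, sub_kronecker, sub_kronecker, kronecker_sub,
    kronecker_sub, smul_kronecker, kronecker_smul, one_kronecker_one]
  module

lemma commute_heisenberg_kroneckerSum_spinMinus :
    Commute (heisenberg θ) (kroneckerSum (spinMinus θ)) := by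
  have h := commute_casimir (e := kroneckerSum (spinPlus θ))
    (by rw [← LieHom.map_lie, lie_spinPlus_spinMinus])
    (by rw [← LieHom.map_lie, nsmul_lie, lie_spin3_spinMinus, smul_neg, map_neg, map_nsmul])
  rw [casimir_kroneckerSum] at h
  have h' := (h.sub_left ((Commute.one_left _).smul_left (2 * ((θ : ℂ) ^ 2 - 1)))).smul_left
    (8 : ℂ)⁻¹
  rwa [add_sub_cancel_right, smul_smul, inv_mul_cancel₀ (by norm_num), one_smul] at h'

noncomputable def raisingProd (θ a : ℕ) : ℂ := ∏ i ∈ Finset.range a, raisingCoeff θ i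

lemma raisingProd_succ (a : ℕ) : raisingProd θ (a + 1) = raisingCoeff θ a * raisingProd θ a := by
  rw [raisingProd, Finset.prod_range_succ, mul_comm, raisingProd]

lemma raisingProd_ne_zero {a : ℕ} (ha : a < θ) : raisingProd θ a ≠ 0 :=
  Finset.prod_ne_zero_iff.mpr fun i hi => raisingCoeff_ne_zero (by simp at hi; omega)

/-- The vector `∑_{a+b = j+θ-1} (-1)^a g(a) g(b) e_a ⊗ e_b` with `g(a) = ∏_{i<a} S⁺_{i+1,i}`:
the two terms of `(S⁺ ⊗ 1 + 1 ⊗ S⁺) v` cancel because `g(a+1) = S⁺_{a+1,a} g(a)`. -/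
noncomputable def highestWeightVector (θ j : ℕ) : Fin θ × Fin θ → ℂ := fun p =>
  if (p.1 : ℕ) + p.2 = j + (θ - 1) then (-1) ^ (p.1 : ℕ) * raisingProd θ p.1 * raisingProd θ p.2
  else 0

lemma kroneckerSum_spinPlus_mulVec_highestWeightVector (j : ℕ) :
    kroneckerSum (spinPlus θ) *ᵥ highestWeightVector θ j = 0 := by
  ext ⟨a, b⟩
  rw [kroneckerSum_mulVec_apply, spinPlus_mulVec_apply, spinPlus_mulVec_apply]
  simp only [highestWeightVector, Pi.zero_apply]
  by_cases hab : (a : ℕ) + b = j + (θ - 1) + 1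
  · have ha : 0 < (a : ℕ) := by omega
    have hb : 0 < (b : ℕ) := by omega
    obtain ⟨a', ha'⟩ : ∃ a', (a : ℕ) = a' + 1 := ⟨a - 1, by omega⟩
    obtain ⟨b', hb'⟩ : ∃ b', (b : ℕ) = b' + 1 := ⟨b - 1, by omega⟩
    rw [dif_pos ha, dif_pos hb]
    simp only [ha', hb', Nat.add_sub_cancel, raisingProd_succ, pow_succ,
      if_pos (show a' + (b' + 1) = j + (θ - 1) by omega),
      if_pos (show a' + 1 + b' = j + (θ - 1) by omega)]
    ring
  · split_ifs <;> first | (exfalso; omega) | simp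

lemma kroneckerSum_spin3_mulVec_highestWeightVector (j : ℕ) :
    kroneckerSum (spin3 θ) *ᵥ highestWeightVector θ j = (j : ℂ) • highestWeightVector θ j := by
  ext ⟨a, b⟩
  simp only [kroneckerSum_mulVec_apply, spin3, mulVec_diagonal, Pi.smul_apply, smul_eq_mul,
    highestWeightVector]
  split_ifs with h
  · have h' : ((a : ℕ) : ℂ) + (b : ℕ) = j + θ - 1 := by
      rw [← Nat.cast_add, h, Nat.cast_add, Nat.cast_sub (by omega)]
      push_cast
      ring
    simp only [mval, spinS]
    push_cast
    linear_combination (-1) ^ (a : ℕ) * raisingProd θ a * raisingProd θ b * h'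
  · simp

lemma highestWeightVector_ne_zero {j : ℕ} (hj : j < θ) : highestWeightVector θ j ≠ 0 := by
  intro h
  have h0 := congrFun h (⟨θ - 1, by omega⟩, ⟨j, hj⟩)
  simp only [highestWeightVector, add_comm (θ - 1), if_true, Pi.zero_apply] at h0
  exact mul_ne_zero (mul_ne_zero (pow_ne_zero _ (by norm_num)) (raisingProd_ne_zero (by omega)))
    (raisingProd_ne_zero hj) h0

lemma swapOp_mulVec (v : Fin θ × Fin θ → ℂ) : swapOp θ *ᵥ v = v ∘ Prod.swap := by
  ext p
  simp [swapOp, mulVec, dotProduct, Fintype.sum_prod_type, ite_and, eq_comm]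
  rfl

lemma swapOp_mulVec_highestWeightVector (j : ℕ) :
    swapOp θ *ᵥ highestWeightVector θ j = (-1 : ℂ) ^ (j + (θ - 1)) • highestWeightVector θ j := by
  rw [swapOp_mulVec]
  ext ⟨a, b⟩
  simp only [Function.comp_apply, Prod.swap_prod_mk, highestWeightVector, Pi.smul_apply,
    add_comm (b : ℕ)]
  split_ifs with h
  · have hsq : (-1 : ℂ) ^ (a : ℕ) * (-1) ^ (a : ℕ) = 1 := by rw [← mul_pow]; norm_num
    rw [← h, pow_add]
    linear_combination (-(-1) ^ (b : ℕ) * raisingProd θ b * raisingProd θ a) * hsq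
  · simp

lemma swapOp_mulVec_kroneckerSum_mulVec (A : Matrix (Fin θ) (Fin θ) ℂ)
    (v : Fin θ × Fin θ → ℂ) :
    swapOp θ *ᵥ (kroneckerSum A *ᵥ v) = kroneckerSum A *ᵥ (swapOp θ *ᵥ v) := by
  ext ⟨a, b⟩
  simp only [swapOp_mulVec, Function.comp_apply, Prod.swap_prod_mk, kroneckerSum_mulVec_apply]
  exact add_comm _ _

lemma hasPrimitiveVectorWith_highestWeightVector (hθ : 2 ≤ θ) {j : ℕ} (hj : j < θ) :
    (isSl2Triple_totalSpin hθ).HasPrimitiveVectorWith (highestWeightVector θ j) (2 * j : ℂ) where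
  ne_zero := highestWeightVector_ne_zero hj
  lie_h := by
    rw [Module.End.lie_apply, toLin'_apply, map_nsmul, smul_mulVec,
      kroneckerSum_spin3_mulVec_highestWeightVector, ← Nat.cast_smul_eq_nsmul ℂ, smul_smul,
      Nat.cast_ofNat]
  lie_e := by
    rw [Module.End.lie_apply, toLin'_apply, kroneckerSum_spinPlus_mulVec_highestWeightVector]

def heisenbergEigenvalue (θ j : ℕ) : ℚ := j * (j + 1) / 2 - ((θ : ℚ) ^ 2 - 1) / 4

lemma heisenberg_mulVec_highestWeightVector (j : ℕ) :
    heisenberg θ *ᵥ highestWeightVector θ j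
      = (heisenbergEigenvalue θ j : ℂ) • highestWeightVector θ j := by
  have key := congrArg (· *ᵥ highestWeightVector θ j) (casimir_kroneckerSum (θ := θ))
  simp only [add_mulVec, smul_mulVec, ← mulVec_mulVec, map_nsmul, one_mulVec, mulVec_smul,
    kroneckerSum_spinPlus_mulVec_highestWeightVector, kroneckerSum_spin3_mulVec_highestWeightVector,
    mulVec_zero, smul_zero, zero_add, smul_smul] at key
  apply smul_right_injective _ (show (8 : ℂ) ≠ 0 by norm_num)
  dsimp only
  rw [heisenbergEigenvalue]
  push_cast
  linear_combination (norm := module) -key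

lemma heisenbergEigenvalue_injective : Function.Injective (heisenbergEigenvalue θ) := by
  intro a b h
  have hab : ((a : ℚ) - b) * (a + b + 1) = 0 := by
    simp only [heisenbergEigenvalue] at h
    linear_combination 2 * h
  have hpos : (a : ℚ) + b + 1 ≠ 0 := by positivity
  exact_mod_cast sub_eq_zero.mp ((mul_eq_zero.mp hab).resolve_right hpos)

noncomputable def weightVector (θ j k : ℕ) : Fin θ × Fin θ → ℂ :=
  kroneckerSum (spinMinus θ) ^ k *ᵥ highestWeightVector θ j

lemma heisenberg_mulVec_weightVector (j k : ℕ) :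
    heisenberg θ *ᵥ weightVector θ j k = (heisenbergEigenvalue θ j : ℂ) • weightVector θ j k := by
  rw [weightVector, mulVec_mulVec, (commute_heisenberg_kroneckerSum_spinMinus.pow_right k).eq,
    ← mulVec_mulVec, heisenberg_mulVec_highestWeightVector, mulVec_smul]

lemma swapOp_mulVec_weightVector (j k : ℕ) :
    swapOp θ *ᵥ weightVector θ j k = (-1 : ℂ) ^ (j + (θ - 1)) • weightVector θ j k := by
  induction k with
  | zero => rw [weightVector, pow_zero, one_mulVec, swapOp_mulVec_highestWeightVector]
  | succ k ih =>
    rw [weightVector, pow_succ', ← mulVec_mulVec, ← weightVector,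
      swapOp_mulVec_kroneckerSum_mulVec, ih, mulVec_smul]

lemma weightVector_eq_pow_toEnd (j k : ℕ) :
    weightVector θ j k = (LieModule.toEnd ℂ _ _ (toLin' (kroneckerSum (spinMinus θ))) ^ k)
      (highestWeightVector θ j) := by
  rw [LieModule.toEnd_module_end, LieHom.id_apply, toLin'_pow_apply, weightVector]

lemma weightVector_ne_zero (hθ : 2 ≤ θ) {j k : ℕ} (hj : j < θ) (hk : k ≤ 2 * j) :
    weightVector θ j k ≠ 0 := by
  rw [weightVector_eq_pow_toEnd]
  exact (hasPrimitiveVectorWith_highestWeightVector hθ hj).pow_toEnd_f_ne_zero_of_eq_nat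
    (by push_cast; ring) hk

lemma kroneckerSum_spin3_mulVec_weightVector (hθ : 2 ≤ θ) {j : ℕ} (hj : j < θ) (k : ℕ) :
    kroneckerSum (spin3 θ) *ᵥ weightVector θ j k = ((j : ℂ) - k) • weightVector θ j k := by
  have h := (hasPrimitiveVectorWith_highestWeightVector hθ hj).lie_h_pow_toEnd_f k
  rw [← weightVector_eq_pow_toEnd, Module.End.lie_apply, toLin'_apply, map_nsmul, smul_mulVec,
    ← Nat.cast_smul_eq_nsmul ℂ, Nat.cast_ofNat] at h
  apply smul_right_injective _ (show (2 : ℂ) ≠ 0 by norm_num)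
  dsimp only
  rw [h, smul_smul]
  congr 1
  ring

lemma sq_add_injective :
    Function.Injective fun i : (Σ j : Fin θ, Fin (2 * j + 1)) => (i.1 : ℕ) ^ 2 + i.2 := by
  rintro ⟨j₁, k₁⟩ ⟨j₂, k₂⟩ h
  have hk₁ := k₁.isLt
  have hk₂ := k₂.isLt
  simp only at h
  have hj : (j₁ : ℕ) = j₂ := by
    rcases lt_trichotomy (j₁ : ℕ) j₂ with hlt | heq | hgt
    · nlinarith
    · exact heq
    · nlinarith
  obtain rfl := Fin.ext hj
  simpa [Fin.ext_iff] using h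

-- On `F^k v_j` the operator `2 S_x·S_y - S³_tot` acts by `j² + k - (θ² - 1)/2`, and `j² + k`
-- determines `(j, k)` because `k ≤ 2j`.
lemma linearIndependent_weightVector (hθ : 2 ≤ θ) :
    LinearIndependent ℂ fun i : (Σ j : Fin θ, Fin (2 * j + 1)) => weightVector θ i.1 i.2 := by
  refine Module.End.eigenvectors_linearIndependent'
    (toLin' ((2 : ℂ) • heisenberg θ - kroneckerSum (spin3 θ)))
    (fun i => (((i.1 : ℕ) ^ 2 + i.2 : ℕ) : ℂ) - ((θ : ℂ) ^ 2 - 1) / 2)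
    ((sub_left_injective).comp (Nat.cast_injective.comp sq_add_injective)) _
    fun i => ⟨?_, weightVector_ne_zero hθ i.1.isLt (by omega)⟩
  rw [Module.End.mem_eigenspace_iff, toLin'_apply, sub_mulVec, smul_mulVec,
    heisenberg_mulVec_weightVector, kroneckerSum_spin3_mulVec_weightVector hθ i.1.isLt, smul_smul,
    ← sub_smul, heisenbergEigenvalue]
  congr 1
  push_cast
  ring

lemma card_sigma_fin_two_mul_add_one :
    Fintype.card (Σ j : Fin θ, Fin (2 * j + 1)) = Module.finrank ℂ (Fin θ × Fin θ → ℂ) := by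
  rw [Module.finrank_fintype_fun_eq_card, Fintype.card_sigma, Fintype.card_prod]
  simp only [Fintype.card_fin]
  rw [Fin.sum_univ_eq_sum_range (fun j => 2 * j + 1), Finset.sum_range_two_mul_add_one]

theorem swapOp_eq_aeval_heisenberg (hθ : 2 ≤ θ) {p : Polynomial ℂ}
    (hp : ∀ j < θ, p.eval (heisenbergEigenvalue θ j : ℂ) = (-1) ^ (j + (θ - 1))) :
    swapOp θ = Polynomial.aeval (heisenberg θ) p := by
  have : Nonempty (Σ j : Fin θ, Fin (2 * j + 1)) := ⟨⟨⟨0, by omega⟩, 0⟩⟩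
  let b := basisOfLinearIndependentOfCardEqFinrank (linearIndependent_weightVector hθ)
    card_sigma_fin_two_mul_add_one
  apply Matrix.toLin'.injective
  refine b.ext fun i => ?_
  rw [coe_basisOfLinearIndependentOfCardEqFinrank, toLin'_apply, toLin'_apply,
    swapOp_mulVec_weightVector,
    aeval_mulVec_eq_eval_smul (heisenberg_mulVec_weightVector _ _), hp _ i.1.isLt]

end SpinSwap

open SpinSwap

/-- for every `S ∈ {1/2, 1, 3/2, …}` (i.e. `θ = 2S+1 ≥ 2`) there are rational
numbers `a_0, …, a_{2S}` with `P = ∑_{k=0}^{2S} a_k (S_x·S_y)^k`. -/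
theorem stmt15 (θ : ℕ) (hθ : 2 ≤ θ) :
    ∃ a : Fin θ → ℚ,
      swapOp θ = ∑ k : Fin θ, ((a k : ℚ) : ℂ) • heisenberg θ ^ (k : ℕ) := by
  obtain ⟨q, hdeg, hq⟩ := Polynomial.exists_natDegree_lt_eval_eq (by omega : 0 < θ)
    ((heisenbergEigenvalue_injective (θ := θ)).comp Fin.val_injective)
    fun j => (-1) ^ ((j : ℕ) + (θ - 1))
  refine ⟨fun k => q.coeff k, ?_⟩
  have hp : ∀ j < θ, (q.map (algebraMap ℚ ℂ)).eval (heisenbergEigenvalue θ j : ℂ)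
      = (-1) ^ (j + (θ - 1)) := fun j hj => by
    have h := hq ⟨j, hj⟩
    rw [Function.comp_apply] at h
    rw [Polynomial.eval_map, ← eq_ratCast (algebraMap ℚ ℂ), Polynomial.eval₂_at_apply, h]
    simp
  rw [swapOp_eq_aeval_heisenberg hθ hp,
    Polynomial.aeval_eq_sum_range' (Polynomial.natDegree_map_le.trans_lt hdeg),
    ← Fin.sum_univ_eq_sum_range (fun k => (q.map (algebraMap ℚ ℂ)).coeff k • heisenberg θ ^ k)]
  simp [Polynomial.coeff_map]
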